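/- Suppose in a competitive equilibrium (x, p) over three identical-type agent groups (each group's internal allocation given by WPS on that group), a chore is transferred from the weighted big earner group N_β to another group, where the previous big earner b in N_β satisfies p_{-1}(x_b)/w_b > p(x_ℓ)/w_ℓ for the weighted least earner ℓ. Then after re-running WPS within N_β on its reduced chore set to get allocation y, every agent i in N_β satisfies p(y_i)/w_i > p(x_ℓ)/w_ℓ; in particular the new weighted least earner cannot cause the minimum weighted earning to decrease. -/
import Mathlib


open Finset

attribute [local instance] Classical.propDecidable

/-- The agent picked by the weighted picking sequence algorithm when the current
chore-counts are `s`: an agent minimizing `s i / w i`, ties broken in favour of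
the smaller index. -/
noncomputable def wpsPick {n : ℕ} [NeZero n] (w : Fin n → ℝ) (s : Fin n → ℕ) : Fin n :=
  (Finset.univ.filter (fun i : Fin n => ∀ k : Fin n, (s i : ℝ) / w i ≤ (s k : ℝ) / w k)).min'
    (by
      obtain ⟨i, -, hi⟩ := Finset.exists_min_image Finset.univ
        (fun i : Fin n => (s i : ℝ) / w i) ⟨0, Finset.mem_univ 0⟩
      exact ⟨i, Finset.mem_filter.2 ⟨Finset.mem_univ i, fun k => hi k (Finset.mem_univ k)⟩⟩)

/-- Number of chores held by each agent after `t` rounds of the WPS algorithm. -/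
noncomputable def wpsCounts {n : ℕ} [NeZero n] (w : Fin n → ℝ) : ℕ → Fin n → ℕ
  | 0 => fun _ => 0
  | t + 1 => fun i => wpsCounts w t i + if wpsPick w (wpsCounts w t) = i then 1 else 0

/-- The agent receiving the `t`-th chore (0-indexed, chores sorted non-increasingly
by payment) in the WPS algorithm. -/
noncomputable def wpsSeq {n : ℕ} [NeZero n] (w : Fin n → ℝ) (t : ℕ) : Fin n :=
  wpsPick w (wpsCounts w t)

/-- The bundle (set of rounds/chore-ranks) received by agent `i` when `m` chores are
allocated by the WPS algorithm. -/
noncomputable def wpsBundle {n : ℕ} [NeZero n] (w : Fin n → ℝ) (m : ℕ) (i : Fin n) :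
    Finset ℕ :=
  (Finset.range m).filter (fun t => wpsSeq w t = i)

/-- `pm1 p S` is the payment of bundle `S` after removing its highest-paying chore,
i.e. `min_{j ∈ S} p (S \ {j})`, with the convention `pm1 p ∅ = 0`. -/
noncomputable def pm1 {χ : Type*} [DecidableEq χ] (p : χ → ℝ) (S : Finset χ) : ℝ :=
  if h : S.Nonempty then S.inf' h (fun j => ∑ c ∈ S.erase j, p c) else 0

section Aux

variable {n : ℕ} [NeZero n] (w : Fin n → ℝ)

lemma wpsPick_min (s : Fin n → ℕ) (k : Fin n) :
    (s (wpsPick w s) : ℝ) / w (wpsPick w s) ≤ (s k : ℝ) / w k := by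
  have h : wpsPick w s ∈ Finset.univ.filter
      (fun i : Fin n => ∀ k : Fin n, (s i : ℝ) / w i ≤ (s k : ℝ) / w k) := by
    unfold wpsPick
    exact Finset.min'_mem _ _
  exact (Finset.mem_filter.1 h).2 k

lemma wpsCounts_succ (t : ℕ) (i : Fin n) :
    wpsCounts w (t+1) i = wpsCounts w t i +
      if wpsPick w (wpsCounts w t) = i then 1 else 0 := rfl

lemma wpsCounts_mono {s t : ℕ} (h : s ≤ t) (i : Fin n) :
    wpsCounts w s i ≤ wpsCounts w t i := by
  induction t, h using Nat.le_induction with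
  | base => exact le_refl _
  | succ t ht ih =>
    refine ih.trans ?_
    rw [wpsCounts_succ]
    exact Nat.le_add_right _ _

lemma wps_P (hw : ∀ k, 0 < w k) :
    ∀ (s : ℕ) (i h : Fin n),
      ((wpsCounts w s h : ℝ) - 1) / w h ≤ (wpsCounts w s i : ℝ) / w i := by
  intro s
  induction s with
  | zero =>
    intro i h
    simp only [wpsCounts, Nat.cast_zero, zero_sub, zero_div]
    exact div_nonpos_of_nonpos_of_nonneg (by norm_num) (hw h).le
  | succ s ih =>
    intro i h
    have inv : ((wpsCounts w (s+1) h : ℝ) - 1) / w h ≤ (wpsCounts w s i : ℝ) / w i := by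
      by_cases hpick : wpsPick w (wpsCounts w s) = h
      · have hc : wpsCounts w (s+1) h = wpsCounts w s h + 1 := by
          rw [wpsCounts_succ, if_pos hpick]
        rw [hc]
        push_cast
        have key := wpsPick_min w (wpsCounts w s) i
        rw [hpick] at key
        simpa using key
      · have hc : wpsCounts w (s+1) h = wpsCounts w s h := by
          rw [wpsCounts_succ, if_neg hpick]
          omega
        rw [hc]
        exact ih i h
    refine inv.trans ?_
    have hmono : (wpsCounts w s i : ℝ) ≤ wpsCounts w (s+1) i := by
      exact_mod_cast wpsCounts_mono w (Nat.le_succ s) i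
    exact div_le_div_of_nonneg_right hmono (hw i).le
  
lemma wps_inv (hw : ∀ k, 0 < w k) (s : ℕ) (i h : Fin n) :
    ((wpsCounts w (s+1) h : ℝ) - 1) / w h ≤ (wpsCounts w s i : ℝ) / w i := by
  by_cases hpick : wpsPick w (wpsCounts w s) = h
  · have hc : wpsCounts w (s+1) h = wpsCounts w s h + 1 := by
      rw [wpsCounts_succ, if_pos hpick]
    rw [hc]
    push_cast
    have key := wpsPick_min w (wpsCounts w s) i
    rw [hpick] at key
    simpa using key
  · have hc : wpsCounts w (s+1) h = wpsCounts w s h := by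
      rw [wpsCounts_succ, if_neg hpick]
      omega
    rw [hc]
    exact wps_P w hw s i h

lemma card_wpsBundle (s : ℕ) (i : Fin n) :
    (wpsBundle w s i).card = wpsCounts w s i := by
  induction s with
  | zero => simp [wpsBundle, wpsCounts]
  | succ s ih =>
    have hsplit : wpsBundle w (s+1) i =
        if wpsSeq w s = i then insert s (wpsBundle w s i) else wpsBundle w s i := by
      rw [wpsBundle, Finset.range_add_one, Finset.filter_insert]
      split <;> rfl
    have hnm : s ∉ wpsBundle w s i := by simp [wpsBundle]
    rw [hsplit, wpsCounts_succ]
    by_cases hp : wpsSeq w s = i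
    · have hp' : wpsPick w (wpsCounts w s) = i := hp
      rw [if_pos hp, if_pos hp', Finset.card_insert_of_notMem hnm, ih]
    · have hp' : ¬ wpsPick w (wpsCounts w s) = i := hp
      rw [if_neg hp, if_neg hp', ih]
      omega

lemma bundle_inter_range (s r : ℕ) (i : Fin n) :
    wpsBundle w s i ∩ Finset.range r = wpsBundle w (min s r) i := by
  ext t
  simp only [wpsBundle, Finset.mem_filter, Finset.mem_inter, Finset.mem_range, lt_min_iff]
  tauto

end Aux

lemma inter_range_inter (A : Finset ℕ) (M r : ℕ) :
    (A ∩ Finset.range M) ∩ Finset.range r = A ∩ Finset.range (min M r) := by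
  ext t
  simp only [Finset.mem_inter, Finset.mem_range, lt_min_iff]
  tauto

lemma abel_aux (p : ℕ → ℝ) (hp : ∀ t, 0 ≤ p t) (hs : ∀ s t : ℕ, s ≤ t → p t ≤ p s)
    (α β : ℝ) :
    ∀ (M : ℕ) (A B : Finset ℕ), A ⊆ Finset.range M → B ⊆ Finset.range M →
      (∀ r : ℕ, α * ((B ∩ Finset.range r).card : ℝ) ≤ β * ((A ∩ Finset.range r).card : ℝ)) →
      α * ∑ t ∈ B, p t + p M * (β * A.card - α * B.card) ≤ β * ∑ t ∈ A, p t := by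
  intro M
  induction M with
  | zero =>
    intro A B hA hB _
    have hAe : A = ∅ := Finset.subset_empty.1 (by simpa using hA)
    have hBe : B = ∅ := Finset.subset_empty.1 (by simpa using hB)
    simp [hAe, hBe]
  | succ M ih =>
    intro A B hA hB hcard
    have hA' : A ∩ Finset.range M ⊆ Finset.range M := Finset.inter_subset_right
    have hB' : B ∩ Finset.range M ⊆ Finset.range M := Finset.inter_subset_right
    have hcard' : ∀ r : ℕ,
        α * (((B ∩ Finset.range M) ∩ Finset.range r).card : ℝ) ≤
        β * (((A ∩ Finset.range M) ∩ Finset.range r).card : ℝ) := by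
      intro r
      rw [inter_range_inter, inter_range_inter]
      exact hcard (min M r)
    have IH := ih _ _ hA' hB' hcard'
    have h0 : α * (B.card : ℝ) ≤ β * (A.card : ℝ) := by
      have h1 := hcard (M+1)
      rwa [Finset.inter_eq_left.2 hA, Finset.inter_eq_left.2 hB] at h1
    have key : p (M+1) * (β * (A.card : ℝ) - α * B.card) ≤
        p M * (β * (A.card : ℝ) - α * B.card) :=
      mul_le_mul_of_nonneg_right (hs M (M+1) (Nat.le_succ M)) (by linarith)
    have decompose : ∀ (C : Finset ℕ), C ⊆ Finset.range (M+1) →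
        (∑ t ∈ C, p t = (∑ t ∈ C ∩ Finset.range M, p t) + (if M ∈ C then p M else 0)) ∧
        ((C.card : ℝ) = ((C ∩ Finset.range M).card : ℝ) + (if M ∈ C then 1 else 0)) := by
      intro C hC
      by_cases hMC : M ∈ C
      · have hCe : C ∩ Finset.range M = C.erase M := by
          ext t
          simp only [Finset.mem_inter, Finset.mem_range, Finset.mem_erase]
          constructor
          · rintro ⟨ht, hlt⟩; exact ⟨by omega, ht⟩
          · rintro ⟨hne, ht⟩
            have := Finset.mem_range.1 (hC ht)
            exact ⟨ht, by omega⟩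
        constructor
        · rw [if_pos hMC, hCe, Finset.sum_erase_add C p hMC]
        · rw [if_pos hMC, hCe]
          have := Finset.card_erase_add_one hMC
          push_cast [← this]
          ring
      · have hCe : C ∩ Finset.range M = C := by
          apply Finset.inter_eq_left.2
          intro t ht
          have := Finset.mem_range.1 (hC ht)
          have hne : t ≠ M := by rintro rfl; exact hMC ht
          exact Finset.mem_range.2 (by omega)
        rw [if_neg hMC, if_neg hMC, hCe]
        constructor <;> simp
    obtain ⟨hsA, hcA⟩ := decompose A hA
    obtain ⟨hsB, hcB⟩ := decompose B hB
    rw [hcA, hcB] at key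
    rw [hsA, hsB, hcA, hcB]
    by_cases hMA : M ∈ A <;> by_cases hMB : M ∈ B <;>
      simp only [hMA, hMB, if_true, if_false, not_false_iff] at key ⊢ <;>
      linarith [IH, key, hp M, hp (M+1)]

/-- Suppose the chores of a group (agents `Fin n` of identical type, bundles given by
WPS on the `m` group chores with payments `p 0 ≥ … ≥ p (m-1) ≥ 0`) lose one chore `j`,
and the previous weighted big earner `b` of the group satisfied
`pm1(x_b)/w_b > p(x_ℓ)/w_ℓ`, where `ℓ` is the weighted least earner (with bundle
payment `pℓ` and weight `wℓ`).  After re-running WPS on the reduced chore set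
(payments `t ↦ p (if t < j then t else t+1)`) to get `y`, every agent `i` of the group
satisfies `p(y_i)/w_i > p(x_ℓ)/w_ℓ`; in particular the new weighted least earner
cannot cause the minimum weighted earning to decrease. -/
theorem wps_transfer_keeps_above_least_earner {n : ℕ} [NeZero n] (w : Fin n → ℝ)
    (hw : ∀ i, 0 < w i) (m j : ℕ) (hj : j < m) (p : ℕ → ℝ) (hp : ∀ t, 0 ≤ p t)
    (hsorted : ∀ s t : ℕ, s ≤ t → p t ≤ p s)
    (b : Fin n) (pℓ wℓ : ℝ) (hwℓ : 0 < wℓ)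
    (hb : pm1 p (wpsBundle w m b) / w b > pℓ / wℓ) :
    ∀ i : Fin n,
      (∑ t ∈ wpsBundle w (m - 1) i, p (if t < j then t else t + 1)) / w i > pℓ / wℓ := by
  intro i
  have hm : 1 ≤ m := by omega
  refine lt_of_lt_of_le hb ?_
  set X := wpsBundle w m b with hXdef
  set Y := wpsBundle w (m - 1) i with hYdef
  have hYnonneg : (0:ℝ) ≤ ∑ t ∈ Y, p (if t < j then t else t + 1) :=
    Finset.sum_nonneg fun t _ => hp _
  by_cases hXne : X.Nonempty
  · set t₀ := X.min' hXne with ht₀def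
    have h1 : pm1 p X ≤ ∑ t ∈ X.erase t₀, p t := by
      rw [pm1, dif_pos hXne]
      exact Finset.inf'_le _ (X.min'_mem hXne)
    have h2 : ∑ t ∈ Y, p (t + 1) ≤ ∑ t ∈ Y, p (if t < j then t else t + 1) := by
      refine Finset.sum_le_sum fun t _ => ?_
      by_cases h : t < j
      · rw [if_pos h]; exact hsorted t (t+1) (Nat.le_succ t)
      · rw [if_neg h]
    -- subsets of range m
    have hYr : ∀ t ∈ Y, t < m - 1 := by
      intro t ht
      rw [hYdef, wpsBundle] at ht
      exact Finset.mem_range.1 (Finset.mem_filter.1 ht).1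
    have hAsub : Y.image (· + 1) ⊆ Finset.range m := by
      intro a ha
      obtain ⟨t, ht, rfl⟩ := Finset.mem_image.1 ha
      exact Finset.mem_range.2 (by have := hYr t ht; omega)
    have hXsub : X ⊆ Finset.range m := by
      intro t ht
      rw [hXdef, wpsBundle] at ht
      exact (Finset.mem_filter.1 ht).1
    have hBsub : X.erase t₀ ⊆ Finset.range m := (Finset.erase_subset _ _).trans hXsub
    -- cardinality comparison
    have hAcard : ∀ r : ℕ, (((Y.image (· + 1)) ∩ Finset.range r).card : ℕ) =
        wpsCounts w (min (m-1) (r-1)) i := by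
      intro r
      have hAr : (Y.image (· + 1)) ∩ Finset.range r = (Y ∩ Finset.range (r-1)).image (· + 1) := by
        ext a
        simp only [Finset.mem_inter, Finset.mem_image, Finset.mem_range]
        constructor
        · rintro ⟨⟨t, ht, rfl⟩, hlt⟩; exact ⟨t, ⟨ht, by omega⟩, rfl⟩
        · rintro ⟨t, ⟨ht, hlt⟩, rfl⟩; exact ⟨⟨t, ht, rfl⟩, by omega⟩
      rw [hAr, Finset.card_image_of_injective _ (fun a b hab => by omega), hYdef,
        bundle_inter_range, card_wpsBundle]
    have hcards : ∀ r : ℕ,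
        w i * (((X.erase t₀) ∩ Finset.range r).card : ℝ) ≤
        w b * (((Y.image (· + 1)) ∩ Finset.range r).card : ℝ) := by
      intro r
      by_cases hXr : (X ∩ Finset.range r).Nonempty
      · obtain ⟨x, hx⟩ := hXr
        have hx1 := (Finset.mem_inter.1 hx).1
        have hx2 := Finset.mem_range.1 (Finset.mem_inter.1 hx).2
        have ht₀r : t₀ ∈ X ∩ Finset.range r :=
          Finset.mem_inter.2 ⟨X.min'_mem hXne, Finset.mem_range.2
            (lt_of_le_of_lt (X.min'_le x hx1) hx2)⟩
        have hr1 : 1 ≤ r := by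
          have := Finset.mem_range.1 (Finset.mem_inter.1 ht₀r).2; omega
        have hBr : (X.erase t₀) ∩ Finset.range r = (X ∩ Finset.range r).erase t₀ := by
          ext t
          simp only [Finset.mem_inter, Finset.mem_erase]
          tauto
        have hXcard : (X ∩ Finset.range r).card = wpsCounts w (min m r) b := by
          rw [hXdef, bundle_inter_range, card_wpsBundle]
        have hmin : min m r = min (m-1) (r-1) + 1 := by omega
        have hpos : 1 ≤ (X ∩ Finset.range r).card := Finset.card_pos.2 ⟨t₀, ht₀r⟩
        have hc1 : 1 ≤ wpsCounts w (min (m-1) (r-1) + 1) b := by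
          rw [← hmin, ← hXcard]; exact hpos
        rw [hBr, Finset.card_erase_of_mem ht₀r, hAcard r, hXcard, hmin]
        set s := min (m-1) (r-1) with hsdef
        have hinv := wps_inv w hw s i b
        rw [div_le_div_iff₀ (hw b) (hw i)] at hinv
        have hcast : ((wpsCounts w (s+1) b - 1 : ℕ) : ℝ) =
            (wpsCounts w (s+1) b : ℝ) - 1 := by
          push_cast [Nat.cast_sub hc1]
          ring
        rw [hcast]
        nlinarith [hinv]
      · have hempty : (X.erase t₀) ∩ Finset.range r = ∅ := by
          rw [Finset.not_nonempty_iff_eq_empty] at hXr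
          refine Finset.subset_empty.1 ?_
          rw [← hXr]
          exact Finset.inter_subset_inter (Finset.erase_subset _ _) (le_refl _)
        rw [hempty]
        simp only [Finset.card_empty, Nat.cast_zero, mul_zero]
        exact mul_nonneg (hw b).le (Nat.cast_nonneg _)
    have habel := abel_aux p hp hsorted (w i) (w b) m (Y.image (· + 1)) (X.erase t₀)
      hAsub hBsub hcards
    have h0 : w i * ((X.erase t₀).card : ℝ) ≤ w b * ((Y.image (· + 1)).card : ℝ) := by
      have hc := hcards (m+1)
      have e1 : (Y.image (· + 1)) ∩ Finset.range (m+1) = Y.image (· + 1) :=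
        Finset.inter_eq_left.2 (hAsub.trans (Finset.range_subset_range.2 (Nat.le_succ m)))
      have e2 : (X.erase t₀) ∩ Finset.range (m+1) = X.erase t₀ :=
        Finset.inter_eq_left.2 (hBsub.trans (Finset.range_subset_range.2 (Nat.le_succ m)))
      rwa [e1, e2] at hc
    have hsum_image : ∑ t ∈ Y.image (· + 1), p t = ∑ t ∈ Y, p (t + 1) :=
      Finset.sum_image (fun a _ b _ hab => by omega)
    have core : w i * ∑ t ∈ X.erase t₀, p t ≤ w b * ∑ t ∈ Y, p (t + 1) := by
      rw [← hsum_image]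
      nlinarith [hp m, habel, h0]
    rw [div_le_div_iff₀ (hw b) (hw i)]
    calc pm1 p X * w i ≤ (∑ t ∈ X.erase t₀, p t) * w i :=
          mul_le_mul_of_nonneg_right h1 (hw i).le
      _ = w i * ∑ t ∈ X.erase t₀, p t := mul_comm _ _
      _ ≤ w b * ∑ t ∈ Y, p (t + 1) := core
      _ ≤ w b * ∑ t ∈ Y, p (if t < j then t else t + 1) :=
          mul_le_mul_of_nonneg_left h2 (hw b).le
      _ = (∑ t ∈ Y, p (if t < j then t else t + 1)) * w b := mul_comm _ _
  · rw [pm1, dif_neg hXne, zero_div]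
    exact div_nonneg hYnonneg (hw i).le
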